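/- There exists a strong completion of Kleene's first model K₁ that is computable in the halting problem: letting H = {e | φ_e(e) is defined}, there exist an H-computable presentation (ψ, E) of a total combinatory algebra and a map f : ℕ → ℕ that is a strong embedding of K₁ into (ψ, E), i.e. there are combinators k₁, s₁ ∈ ℕ for K₁ such that f is a weak embedding of K₁ into (ψ, E) and f k₁, f s₁ serve as the combinators k, s for (ψ, E). -/

import Mathlib

/-- Partial recursive functions relative to an oracle `O : ℕ →. ℕ`
(relativization of Mathlib's `Nat.Partrec`). -/
inductive OracleRecursiveIn (O : ℕ →. ℕ) : (ℕ →. ℕ) → Prop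
  | zero : OracleRecursiveIn O (pure 0)
  | succ : OracleRecursiveIn O ↑Nat.succ
  | left : OracleRecursiveIn O ↑fun n : ℕ => n.unpair.1
  | right : OracleRecursiveIn O ↑fun n : ℕ => n.unpair.2
  | oracle : OracleRecursiveIn O O
  | pair {f g} : OracleRecursiveIn O f → OracleRecursiveIn O g →
      OracleRecursiveIn O fun n => Nat.pair <$> f n <*> g n
  | comp {f g} : OracleRecursiveIn O f → OracleRecursiveIn O g →
      OracleRecursiveIn O fun n => g n >>= f
  | prec {f g} : OracleRecursiveIn O f → OracleRecursiveIn O g →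
      OracleRecursiveIn O (Nat.unpaired fun a n =>
        n.rec (f a) fun y IH => do let i ← IH; g (Nat.pair a (Nat.pair y i)))
  | rfind {f} : OracleRecursiveIn O f →
      OracleRecursiveIn O fun a => Nat.rfind fun n => (fun m => m = 0) <$> f (Nat.pair a n)

open scoped Classical in
/-- The characteristic function of a set `Y ⊆ ℕ`, as a partial function. -/
noncomputable def chi (Y : Set ℕ) : ℕ →. ℕ :=
  fun n => Part.some (if n ∈ Y then 1 else 0)

/-- The `e`-th partial computable function on `ℕ`. -/
def phi (e : ℕ) : ℕ →. ℕ :=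
  Nat.Partrec.Code.eval (Denumerable.ofNat Nat.Partrec.Code e)

/-- `(ψ, E)` is a `Y`-computable presentation of a total combinatory algebra:
`ψ` is total and recursive in `Y`, `E` is an equivalence relation decidable in `Y`
which is a congruence for `ψ`, and there are combinators `k`, `s`. -/
structure YPresentation (Y : Set ℕ) (ψ : ℕ → ℕ → ℕ) (E : ℕ → ℕ → Prop) : Prop where
  psi_rec : OracleRecursiveIn (chi Y) (fun n : ℕ => Part.some (ψ n.unpair.1 n.unpair.2))
  equiv : Equivalence E
  E_rec : OracleRecursiveIn (chi Y) (chi {n : ℕ | E n.unpair.1 n.unpair.2})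
  congruence : ∀ {n n' m m'}, E n n' → E m m' → E (ψ n m) (ψ n' m')
  comb : ∃ k s : ℕ, ∀ a b c : ℕ,
    E (ψ (ψ k a) b) a ∧ E (ψ (ψ (ψ s a) b) c) (ψ (ψ a c) (ψ b c))

/-- `f` is a weak embedding of Kleene's first model `K₁` into `(ψ, E)`. -/
def WeakEmb (ψ : ℕ → ℕ → ℕ) (E : ℕ → ℕ → Prop) (f : ℕ → ℕ) : Prop :=
  (∀ n m, E (f n) (f m) → n = m) ∧
  ∀ a b c : ℕ, phi a b = Part.some c → E (ψ (f a) (f b)) (f c)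

/-- Strict application for `K₁` on partial arguments. -/
def pappN (x y : Part ℕ) : Part ℕ :=
  x.bind fun a => y.bind fun b => phi a b

/-- `k₁` and `s₁` are combinators for Kleene's first model `K₁`:
for all `a, b, c`, `φ_{k₁}(a)↓`, `φ_{φ_{k₁}(a)}(b) = a`, `φ_{s₁}(a)↓`,
`φ_{φ_{s₁}(a)}(b)↓`, and `φ_{φ_{φ_{s₁}(a)}(b)}(c) ≃ φ_{φ_a(c)}(φ_b(c))`. -/
def K1Combinators (k₁ s₁ : ℕ) : Prop :=
  ∀ a b c : ℕ,
    (phi k₁ a).Dom ∧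
    pappN (phi k₁ a) (Part.some b) = Part.some a ∧
    (phi s₁ a).Dom ∧
    (pappN (phi s₁ a) (Part.some b)).Dom ∧
    pappN (pappN (phi s₁ a) (Part.some b)) (Part.some c) = pappN (phi a c) (phi b c)

/-- `f` is a strong embedding of `K₁` into `(ψ, E)`: a weak embedding such that
for some combinators `k₁, s₁` of `K₁`, the images `f k₁` and `f s₁` serve as
combinators for `(ψ, E)`. -/
def StrongEmb (ψ : ℕ → ℕ → ℕ) (E : ℕ → ℕ → Prop) (f : ℕ → ℕ) : Prop :=
  ∃ k₁ s₁ : ℕ, K1Combinators k₁ s₁ ∧ WeakEmb ψ E f ∧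
    ∀ a b c : ℕ,
      E (ψ (ψ (f k₁) a) b) a ∧
      E (ψ (ψ (ψ (f s₁) a) b) c) (ψ (ψ a c) (ψ b c))

/-!
Take the applicative terms over `K₁` (binary trees with naturals at the leaves) and let a term
reduce by `K₁`-application of two leaves and by the laws of `k`, `k a`, `s`, `s a`, `s a b`
applied to arbitrary subterms. Parallel reduction has the diamond property, by Takahashi's
complete developments, so convertibility (having a common reduct) is an equivalence and a
congruence under which distinct leaves stay distinct. Transported to `ℕ` along a coding of
terms, this gives a total combinatory algebra into which the leaves embed `K₁` strongly.
Convertibility is r.e., being witnessed by two finite reduction sequences, hence decidable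
relative to the halting set.

The indices `k a`, `s a b`, `s a`, `k`, `s` are taken from a single injectively tagged family
of indices, obtained from Kleene's recursion theorem, so that no two of them coincide.
-/

open Nat.Partrec (Code)
open Nat.Partrec.Code Encodable Relation

theorem OracleRecursiveIn.of_partrec {O f : ℕ →. ℕ} (h : Nat.Partrec f) :
    OracleRecursiveIn O f := by
  induction h with
  | zero => exact .zero
  | succ => exact .succ
  | left => exact .left
  | right => exact .right
  | pair _ _ ih₁ ih₂ => exact .pair ih₁ ih₂
  | comp _ _ ih₁ ih₂ => exact .comp ih₁ ih₂
  | prec _ _ ih₁ ih₂ => exact .prec ih₁ ih₂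
  | rfind _ ih => exact .rfind ih

theorem REPred.exists {α β : Type*} [Primcodable α] [Primcodable β] {p : α → β → Prop}
    (hp : PrimrecRel p) : REPred fun a => ∃ b, p a b := by
  classical
  have hf : Computable₂ fun (a : α) (n : ℕ) =>
      (decode (α := β) n).bind fun b => if p a b then some b else none :=
    (Primrec.option_bind (Primrec.decode.comp Primrec.snd)
      (Primrec.ite (hp.comp (Primrec.fst.comp Primrec.fst) Primrec.snd)
        (Primrec.option_some.comp Primrec.snd) (Primrec.const none)).to₂).to_comp.to₂
  refine (Partrec.rfindOpt hf).dom_re.of_eq fun a => ?_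
  rw [Nat.rfindOpt_dom]
  constructor
  · rintro ⟨n, b, hb⟩
    simp only [Option.mem_def, Option.bind_eq_some_iff, Option.ite_none_right_eq_some] at hb
    exact ⟨_, hb.choose_spec.2.1⟩
  · rintro ⟨b, hb⟩
    exact ⟨encode b, b, by simp [hb]⟩

theorem partrec₂_phi : Partrec₂ phi :=
  eval_part.comp ((Computable.ofNat Code).comp Computable.fst) Computable.snd

theorem Partrec.pappN {α : Type*} [Primcodable α] {f g : α →. ℕ} (hf : Partrec f)
    (hg : Partrec g) : Partrec fun a => pappN (f a) (g a) :=
  hf.bind <| ((hg.comp Computable.fst).bind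
    (partrec₂_phi.comp (Computable.snd.comp Computable.fst) Computable.snd).to₂).to₂

theorem eq_some_of_pappN_eq_some {x y : Part ℕ} {d : ℕ} (h : pappN x y = Part.some d) :
    ∃ e g, x = Part.some e ∧ y = Part.some g ∧ phi e g = Part.some d := by
  obtain ⟨e, he, hd⟩ := Part.mem_bind_iff.1 (Part.eq_some_iff.1 h)
  obtain ⟨g, hg, hd⟩ := Part.mem_bind_iff.1 hd
  exact ⟨e, g, Part.eq_some_iff.2 he, Part.eq_some_iff.2 hg, Part.eq_some_iff.2 hd⟩

theorem Primrec.sumElim {β γ σ : Type*} [Primcodable β] [Primcodable γ] [Primcodable σ]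
    {f : β → σ} {g : γ → σ} (hf : Primrec f) (hg : Primrec g) : Primrec (Sum.elim f g) :=
  (sumCasesOn .id (hf.comp .snd).to₂ (hg.comp .snd).to₂).of_eq fun x => by cases x <;> rfl

theorem Relation.reflTransGen_iff_exists_foldl {α W : Type*} {R : α → α → Prop}
    (next : W → α → Option α) (hR : ∀ a b, R a b ↔ ∃ w, next w a = some b) (a b : α) :
    ReflTransGen R a b ↔ ∃ L : List W, L.foldl (fun o w => o.bind (next w)) (some a) = some b := by
  constructor
  · intro h
    induction h with
    | refl => exact ⟨[], rfl⟩
    | tail _ hbc ih =>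
      obtain ⟨L, hL⟩ := ih
      obtain ⟨w, hw⟩ := (hR _ _).1 hbc
      exact ⟨L ++ [w], by simp [hL, hw]⟩
  · rintro ⟨L, hL⟩
    induction L generalizing a with
    | nil => cases hL; exact .refl
    | cons w L ih =>
      rcases hw : next w a with _ | a'
      · have hnone : ∀ L' : List W, L'.foldl (fun o w => o.bind (next w)) none = none := by
          intro L'; induction L' <;> simp [*]
        simp [hw, hnone] at hL
      · simp only [List.foldl_cons, Option.bind_some, hw] at hL
        exact .head ((hR _ _).2 ⟨w, hw⟩) (ih a' hL)

abbrev haltingSet : Set ℕ := {e | (phi e e).Dom}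

@[simp]
theorem phi_encode (c : Code) (n : ℕ) : phi (encode c) n = eval c n := by
  simp [phi, Denumerable.ofNat_encode]

theorem REPred.oracleRecursiveIn_chi_haltingSet {S : ℕ → Prop} (hS : REPred S) :
    OracleRecursiveIn (chi haltingSet) (chi {n | S n}) := by
  obtain ⟨c, hc⟩ : ∃ c : Code, ∀ n m, (eval c (Nat.pair n m)).Dom ↔ S n := by
    obtain ⟨c, hc⟩ := exists_code.1 (Partrec.nat_iff.1
      ((hS.comp (Computable.fst.comp Computable.unpair)).map (Computable.const 0).to₂))
    exact ⟨c, fun n m => by simp [hc, Part.assert]⟩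
  -- `J n` is an index that, on any input, halts iff `S n`
  let J : ℕ → ℕ := fun n => encode (c.curry n)
  have hJ : Primrec J := Primrec.encode.comp (primrec₂_curry.comp (Primrec.const _) Primrec.id)
  have hchi : chi {n | S n} = fun n => (J : ℕ →. ℕ) n >>= chi haltingSet := by
    funext n
    refine Eq.trans ?_ (Part.bind_some _ _).symm
    by_cases h : S n <;> simp [J, chi, hc, h]
  rw [hchi]
  exact .comp .oracle (.of_partrec (Partrec.nat_iff.1 hJ.to_comp.partrec))

namespace K1

/-! ### Indices of `K₁` -/

/-- `program c ⟨⟨i, x⟩, y⟩` is the intended value of `φ_{idx i x}(y)`, where `idx i x` is `c`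
curried at `⟨i, x⟩`; the tags `i = 0, 1, 2, 3, 4` stand for `k a`, `s a b`, `s a`, `k`, `s`. -/
def program (c : Code) (n : ℕ) : Part ℕ :=
  let i := n.unpair.1.unpair.1
  let x := n.unpair.1.unpair.2
  let y := n.unpair.2
  let idx (j z : ℕ) : ℕ := encode (c.curry (Nat.pair j z))
  if i = 1 then pappN (phi x.unpair.1 y) (phi x.unpair.2 y)
  else Part.some <|
    if i = 0 then x else if i = 2 then idx 1 (Nat.pair x y) else if i = 3 then idx 0 y else idx 2 y

theorem partrec₂_program : Partrec₂ program := by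
  open Primrec in
  have hi : Primrec fun p : Code × ℕ => p.2.unpair.1.unpair.1 :=
    fst.comp (unpair.comp (fst.comp (unpair.comp snd)))
  have hx : Primrec fun p : Code × ℕ => p.2.unpair.1.unpair.2 :=
    snd.comp (unpair.comp (fst.comp (unpair.comp snd)))
  have hy : Primrec fun p : Code × ℕ => p.2.unpair.2 := snd.comp (unpair.comp snd)
  have hidx : Primrec₂ fun (p : Code × ℕ) (n : ℕ) => encode (p.1.curry n) :=
    Primrec.encode.comp (primrec₂_curry.comp (fst.comp fst) snd)
  have htag (j : ℕ) : PrimrecPred fun p : Code × ℕ => p.2.unpair.1.unpair.1 = j :=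
    Primrec.eq.comp hi (const j)
  have htotal := Primrec.ite (htag 0) hx <| Primrec.ite (htag 2)
    (hidx.comp .id (Primrec₂.natPair.comp (const 1) (Primrec₂.natPair.comp hx hy))) <|
    Primrec.ite (htag 3) (hidx.comp .id (Primrec₂.natPair.comp (const 0) hy))
      (hidx.comp .id (Primrec₂.natPair.comp (const 2) hy))
  have hsab : Partrec fun p : Code × ℕ =>
      pappN (phi p.2.unpair.1.unpair.2.unpair.1 p.2.unpair.2)
        (phi p.2.unpair.1.unpair.2.unpair.2 p.2.unpair.2) :=
    Partrec.pappN (partrec₂_phi.comp (fst.comp (unpair.comp hx)).to_comp hy.to_comp)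
      (partrec₂_phi.comp (snd.comp (unpair.comp hx)).to_comp hy.to_comp)
  refine (Partrec.cond ((htag 1).decide.to_comp) hsab htotal.to_comp.partrec).of_eq fun p => ?_
  by_cases h : p.2.unpair.1.unpair.1 = 1 <;> simp [program, h]

/-- A fixed point of `program`, by Kleene's recursion theorem. -/
noncomputable def selfCode : Code := (fixed_point₂ partrec₂_program).choose

noncomputable def index (i x : ℕ) : ℕ := encode (selfCode.curry (Nat.pair i x))

theorem phi_index (i x y : ℕ) :
    phi (index i x) y = program selfCode (Nat.pair (Nat.pair i x) y) := by
  rw [index, phi_encode, eval_curry]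
  exact congrFun (fixed_point₂ partrec₂_program).choose_spec _

@[simp]
theorem index_inj {i x j y : ℕ} : index i x = index j y ↔ i = j ∧ x = y := by
  constructor
  · intro h
    simpa using (curry_inj (encode_injective h)).2
  · rintro ⟨rfl, rfl⟩; rfl

theorem primrec₂_index : Primrec₂ index :=
  Primrec.encode.comp (primrec₂_curry.comp (Primrec.const _) Primrec₂.natPair)

noncomputable def ka (a : ℕ) : ℕ := index 0 a
noncomputable def sab (a b : ℕ) : ℕ := index 1 (Nat.pair a b)
noncomputable def sa (a : ℕ) : ℕ := index 2 a
noncomputable def k : ℕ := index 3 0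
noncomputable def s : ℕ := index 4 0

theorem phi_ka (a b : ℕ) : phi (ka a) b = Part.some a := by simp [ka, phi_index, program]
theorem phi_sab (a b c : ℕ) : phi (sab a b) c = pappN (phi a c) (phi b c) := by
  simp [sab, phi_index, program]
theorem phi_sa (a b : ℕ) : phi (sa a) b = Part.some (sab a b) := by
  simp [sa, phi_index, program]; rfl
theorem phi_k (a : ℕ) : phi k a = Part.some (ka a) := by simp [k, phi_index, program]; rfl
theorem phi_s (a : ℕ) : phi s a = Part.some (sa a) := by simp [s, phi_index, program]; rfl

theorem k1Combinators : K1Combinators k s := by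
  intro a b c
  simp [pappN, phi_k, phi_ka, phi_s, phi_sa, phi_sab]

/-! ### Terms and their reduction -/

inductive Term : Type
  | leaf : ℕ → Term
  | node : Term → Term → Term
deriving DecidableEq

namespace Term

def toNat : Term → ℕ
  | leaf n => 2 * n
  | node x y => 2 * Nat.pair x.toNat y.toNat + 1

def ofNat (n : ℕ) : Term :=
  if _ : n % 2 = 0 then leaf (n / 2) else node (ofNat (n / 2).unpair.1) (ofNat (n / 2).unpair.2)
decreasing_by
  · exact (Nat.unpair_left_le _).trans_lt (Nat.div_lt_self (by omega) (by omega))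
  · exact (Nat.unpair_right_le _).trans_lt (Nat.div_lt_self (by omega) (by omega))

theorem ofNat_toNat : ∀ t, ofNat (toNat t) = t
  | leaf n => by rw [toNat, ofNat]; simp
  | node x y => by
    rw [toNat, ofNat, dif_neg (by omega), show (2 * Nat.pair x.toNat y.toNat + 1) / 2 =
      Nat.pair x.toNat y.toNat by omega]
    simp [ofNat_toNat x, ofNat_toNat y]

theorem toNat_ofNat (n : ℕ) : toNat (ofNat n) = n := by
  induction n using Nat.strong_induction_on with
  | _ n ih =>
    rw [ofNat]
    split_ifs with h
    · rw [toNat]; omega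
    · have hlt : n / 2 < n := Nat.div_lt_self (by omega) (by omega)
      rw [toNat, ih _ ((Nat.unpair_left_le _).trans_lt hlt),
        ih _ ((Nat.unpair_right_le _).trans_lt hlt), Nat.pair_unpair]
      omega

def equivNat : Term ≃ ℕ := ⟨toNat, ofNat, ofNat_toNat, toNat_ofNat⟩

instance : Primcodable Term := Primcodable.ofEquiv ℕ equivNat

theorem primrec_toNat : Primrec toNat := Primrec.of_equiv (e := equivNat)

theorem primrec_ofNat : Primrec ofNat := Primrec.of_equiv_symm (e := equivNat)

theorem primrec_leaf : Primrec leaf :=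
  (Primrec.of_equiv_iff equivNat).1 (Primrec.nat_mul.comp (Primrec.const 2) .id)

theorem primrec₂_node : Primrec₂ node :=
  (Primrec.of_equiv_iff equivNat).1 <| Primrec.succ.comp <| Primrec.nat_mul.comp (Primrec.const 2)
    (Primrec₂.natPair.comp (primrec_toNat.comp .fst) (primrec_toNat.comp .snd))

end Term

open Term

-- Heads are given by equations `m = ka a` rather than as `leaf (ka a)`, so that `cases` can
-- invert `Contract` at a concrete head.
inductive Contract : Term → Term → Prop
  | app {a b c : ℕ} : phi a b = Part.some c → Contract (node (leaf a) (leaf b)) (leaf c)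
  | ka {m a : ℕ} (y : Term) : m = ka a → Contract (node (leaf m) y) (leaf a)
  | sab {m a b : ℕ} (z : Term) : m = sab a b →
      Contract (node (leaf m) z) (node (node (leaf a) z) (node (leaf b) z))
  | k {m : ℕ} (x y : Term) : m = k → Contract (node (node (leaf m) x) y) x
  | sa {m a : ℕ} (y z : Term) : m = sa a →
      Contract (node (node (leaf m) y) z) (node (node (leaf a) z) (node y z))
  | s {m : ℕ} (x y z : Term) : m = s →
      Contract (node (node (node (leaf m) x) y) z) (node (node x z) (node y z))

inductive Par : Term → Term → Prop
  | leaf (n : ℕ) : Par (Term.leaf n) (Term.leaf n)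
  | node {x x' y y' : Term} : Par x x' → Par y y' → Par (Term.node x y) (Term.node x' y')
  | contract {x x' y y' r : Term} : Par x x' → Par y y' → Contract (Term.node x' y') r →
      Par (Term.node x y) r

@[refl]
theorem Par.refl : ∀ t, Par t t
  | .leaf n => .leaf n
  | .node x y => .node (Par.refl x) (Par.refl y)

theorem Contract.par {t u : Term} (h : Contract t u) : Par t u := by
  obtain ⟨x, y, rfl⟩ : ∃ x y, t = node x y := by cases h <;> exact ⟨_, _, rfl⟩
  exact .contract (.refl x) (.refl y) h

theorem eq_of_par_leaf {n : ℕ} {u : Term} (h : Par (leaf n) u) : u = leaf n := by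
  cases h; rfl

theorem par_node_iff {x y u : Term} : Par (node x y) u ↔ ∃ x' y', Par x x' ∧ Par y y' ∧
    (u = node x' y' ∨ Contract (node x' y') u) := by
  constructor
  · rintro (_ | ⟨hx, hy⟩ | ⟨hx, hy, hc⟩)
    exacts [⟨_, _, hx, hy, .inl rfl⟩, ⟨_, _, hx, hy, .inr hc⟩]
  · rintro ⟨x', y', hx, hy, rfl | hc⟩
    exacts [.node hx hy, .contract hx hy hc]

noncomputable def untag : ℕ → Option (ℕ × ℕ) := Function.partialInv (Function.uncurry index)

theorem injective_uncurry_index : Function.Injective (Function.uncurry index) :=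
  fun _ _ h => Prod.ext_iff.2 (index_inj.1 h)

theorem untag_index (i x : ℕ) : untag (index i x) = some (i, x) :=
  Function.partialInv_left injective_uncurry_index (i, x)

theorem eq_index_of_untag {m i x : ℕ} (h : untag m = some (i, x)) : m = index i x :=
  ((injective_uncurry_index.isPartialInv _ _).1 h).symm

noncomputable def headContract (m : ℕ) (v : Term) : Term :=
  match untag m with
  | some (0, a) => leaf a
  | some (1, p) => node (node (leaf p.unpair.1) v) (node (leaf p.unpair.2) v)
  | _ => node (leaf m) v

open Classical in
/-- Contracts `node u v` at the root if it is a redex. Where `K₁`-application and the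
`s a b`-law overlap, application wins: the other contractum reduces to it in one parallel step
(`par_ap_sab`), not conversely. -/
noncomputable def ap : Term → Term → Term
  | leaf m, leaf b =>
    if h : (phi m b).Dom then leaf ((phi m b).get h) else headContract m (leaf b)
  | leaf m, v => headContract m v
  | node (leaf m) w, v =>
    match untag m with
    | some (3, 0) => w
    | some (2, a) => node (node (leaf a) v) (node w v)
    | _ => node (node (leaf m) w) v
  | node (node (leaf m) w₁) w₂, v =>
    match untag m with
    | some (4, 0) => node (node w₁ v) (node w₂ v)
    | _ => node (node (node (leaf m) w₁) w₂) v
  | u, v => node u v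

theorem headContract_ka (a : ℕ) (v : Term) : headContract (ka a) v = leaf a := by
  simp [headContract, ka, untag_index]

theorem headContract_sab (a b : ℕ) (v : Term) :
    headContract (sab a b) v = node (node (leaf a) v) (node (leaf b) v) := by
  simp [headContract, sab, untag_index]

theorem ap_app {a b c : ℕ} (h : phi a b = Part.some c) : ap (leaf a) (leaf b) = leaf c := by
  simp [ap, h]

theorem ap_ka (a : ℕ) (v : Term) : ap (leaf (ka a)) v = leaf a := by
  cases v with
  | leaf b => exact ap_app (phi_ka a b)
  | node => simp [ap, headContract_ka]

theorem ap_k (w v : Term) : ap (node (leaf k) w) v = w := by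
  simp [ap, k, untag_index]

theorem ap_sa (a : ℕ) (w v : Term) :
    ap (node (leaf (sa a)) w) v = node (node (leaf a) v) (node w v) := by
  simp [ap, sa, untag_index]

theorem ap_s (w₁ w₂ v : Term) :
    ap (node (node (leaf s) w₁) w₂) v = node (node w₁ v) (node w₂ v) := by
  simp [ap, s, untag_index]

theorem headContract_eq_or_contract (m : ℕ) (v : Term) :
    headContract m v = node (leaf m) v ∨ Contract (node (leaf m) v) (headContract m v) := by
  unfold headContract
  split
  next a h => exact .inr (.ka v (eq_index_of_untag h))
  next p h =>
    refine .inr (.sab v ?_)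
    rw [eq_index_of_untag h, sab, Nat.pair_unpair]
  next => exact .inl rfl

theorem ap_eq_or_contract : ∀ u v, ap u v = node u v ∨ Contract (node u v) (ap u v)
  | leaf m, leaf b => by
    by_cases hd : (phi m b).Dom
    · exact .inr (by rw [ap, dif_pos hd]; exact .app (Part.some_get hd).symm)
    · rw [ap, dif_neg hd]; exact headContract_eq_or_contract m _
  | leaf m, node _ _ => headContract_eq_or_contract m _
  | node (leaf m) w, v => by
    simp only [ap]
    split
    next h => exact .inr (.k w v (eq_index_of_untag h))
    next a h => exact .inr (.sa w v (eq_index_of_untag h))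
    next => exact .inl rfl
  | node (node (leaf m) w₁) w₂, v => by
    simp only [ap]
    split
    next h => exact .inr (.s w₁ w₂ v (eq_index_of_untag h))
    next => exact .inl rfl
  | node (node (node _ _) _) _, _ => .inl rfl

theorem par_ap {x y u v : Term} (hu : Par x u) (hv : Par y v) : Par (node x y) (ap u v) := by
  rcases ap_eq_or_contract u v with h | h
  · rw [h]; exact .node hu hv
  · exact .contract hu hv h

/-! ### Confluence -/

theorem par_ap_sab {a b : ℕ} {A B z v : Term} (hA : Par A (leaf a)) (hB : Par B (leaf b))
    (hz : Par z v) : Par (node (node A z) (node B z)) (ap (leaf (sab a b)) v) := by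
  cases v with
  | node v₁ v₂ =>
    rw [show ap (leaf (sab a b)) (node v₁ v₂) = headContract _ _ from rfl, headContract_sab]
    exact .node (.node hA hz) (.node hB hz)
  | leaf c =>
    by_cases hd : (phi (sab a b) c).Dom
    · have hsab := Part.some_get hd
      obtain ⟨e, g, he, hg, heg⟩ :=
        eq_some_of_pappN_eq_some ((phi_sab a b c).symm.trans hsab.symm)
      rw [ap_app hsab.symm]
      exact .contract (.contract hA hz (.app he)) (.contract hB hz (.app hg)) (.app heg)
    · rw [ap, dif_neg hd, headContract_sab]
      exact .node (.node hA hz) (.node hB hz)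

theorem par_ap_of_par_k {x u : Term} (hu : Par (node (leaf k) x) u) (v : Term) :
    Par x (ap u v) := by
  obtain ⟨X, W, hX, hW, rfl | hc⟩ := par_node_iff.1 hu
  · rw [eq_of_par_leaf hX, ap_k]; exact hW
  · rw [eq_of_par_leaf hX] at hc
    cases hc with
    | app h =>
      rw [phi_k] at h
      rw [← Part.some_inj.1 h, ap_ka]
      exact hW
    | ka _ h => simp [k, ka] at h
    | sab _ h => simp [k, sab] at h

theorem par_ap_of_par_sa {a : ℕ} {A w z u v : Term} (hA : Par A (leaf a))
    (hu : Par (node (leaf (sa a)) w) u) (hz : Par z v) :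
    Par (node (node A z) (node w z)) (ap u v) := by
  obtain ⟨X, W, hX, hW, rfl | hc⟩ := par_node_iff.1 hu
  · rw [eq_of_par_leaf hX, ap_sa]; exact .node (.node hA hz) (.node hW hz)
  · rw [eq_of_par_leaf hX] at hc
    cases hc with
    | app h =>
      rw [phi_sa] at h
      rw [← Part.some_inj.1 h]
      exact par_ap_sab hA hW hz
    | ka _ h => simp [sa, ka] at h
    | sab _ h => simp [sa, sab] at h

theorem par_ap_of_par_s {x w z u v : Term} (hu : Par (node (node (leaf s) x) w) u)
    (hz : Par z v) : Par (node (node x z) (node w z)) (ap u v) := by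
  obtain ⟨X, W₂, hX, hW₂, hu⟩ := par_node_iff.1 hu
  obtain ⟨S, W₁, hS, hW₁, rfl | hc⟩ := par_node_iff.1 hX
  · rw [eq_of_par_leaf hS] at hu
    rcases hu with rfl | hc
    · rw [ap_s]; exact .node (.node hW₁ hz) (.node hW₂ hz)
    · cases hc with
      | k _ _ h => simp [s, k] at h
      | sa _ _ h => simp [s, sa] at h
  · rw [eq_of_par_leaf hS] at hc
    cases hc with
    | app h =>
      rw [phi_s] at h
      rw [← Part.some_inj.1 h] at hu
      exact par_ap_of_par_sa hW₁ (par_node_iff.2 ⟨_, _, .refl _, hW₂, hu⟩) hz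
    | ka _ h => simp [s, ka] at h
    | sab _ h => simp [s, sab] at h

theorem par_ap_of_contract {x y r u v : Term} (hr : Contract (node x y) r) (hu : Par x u)
    (hv : Par y v) : Par r (ap u v) := by
  cases hr with
  | app h => rw [eq_of_par_leaf hu, eq_of_par_leaf hv, ap_app h]
  | ka _ hm => rw [eq_of_par_leaf hu, hm, ap_ka]
  | sab _ hm => rw [eq_of_par_leaf hu, hm]; exact par_ap_sab (.leaf _) (.leaf _) hv
  | k _ _ hm => rw [hm] at hu; exact par_ap_of_par_k hu v
  | sa _ _ hm => rw [hm] at hu; exact par_ap_of_par_sa (.leaf _) hu hv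
  | s _ _ _ hm => rw [hm] at hu; exact par_ap_of_par_s hu hv

noncomputable def dev : Term → Term
  | leaf n => leaf n
  | node x y => ap (dev x) (dev y)

theorem par_dev {t u : Term} (h : Par t u) : Par u (dev t) := by
  induction h with
  | leaf n => exact .leaf n
  | node _ _ ihx ihy => exact par_ap ihx ihy
  | contract _ _ hc ihx ihy => exact par_ap_of_contract hc ihx ihy

def Conv : Term → Term → Prop := Join (ReflTransGen Par)

theorem conv_equivalence : Equivalence Conv :=
  equivalence_join_reflTransGen fun t _ _ hu hv =>
    ⟨dev t, .single (par_dev hu), .single (par_dev hv)⟩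

theorem reflTransGen_par_node {x x' y y' : Term} (hx : ReflTransGen Par x x')
    (hy : ReflTransGen Par y y') : ReflTransGen Par (node x y) (node x' y') :=
  (hx.lift (node · y) fun _ _ h => .node h (.refl y)).trans
    (hy.lift (node x' ·) fun _ _ h => .node (.refl x') h)

theorem Conv.node {x x' y y' : Term} (hx : Conv x x') (hy : Conv y y') :
    Conv (node x y) (node x' y') := by
  obtain ⟨u, hxu, hx'u⟩ := hx
  obtain ⟨v, hyv, hy'v⟩ := hy
  exact ⟨Term.node u v, reflTransGen_par_node hxu hyv, reflTransGen_par_node hx'u hy'v⟩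

theorem eq_of_reflTransGen_par_leaf {n : ℕ} {u : Term} (h : ReflTransGen Par (leaf n) u) :
    u = leaf n := by
  induction h with
  | refl => rfl
  | tail _ h ih => subst ih; exact eq_of_par_leaf h

theorem Conv.eq_of_leaf {n m : ℕ} (h : Conv (leaf n) (leaf m)) : n = m := by
  obtain ⟨u, hn, hm⟩ := h
  simpa using (eq_of_reflTransGen_par_leaf hn).symm.trans (eq_of_reflTransGen_par_leaf hm)

theorem Contract.conv {t u : Term} (h : Contract t u) : Conv t u :=
  ⟨u, .single h.par, .refl⟩

/-! ### Convertibility is r.e. -/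

/-- Plugs a term into a one-hole context, listed from the hole outwards: `(true, y)` puts the
hole to the left of `y`, `(false, x)` to the right of `x`. -/
def plug (C : List (Bool × Term)) (t : Term) : Term :=
  C.foldl (fun t p => bif p.1 then node t p.2 else node p.2 t) t

theorem Par.plug {t u : Term} (h : Par t u) (C : List (Bool × Term)) :
    Par (plug C t) (plug C u) := by
  induction C generalizing t u with
  | nil => exact h
  | cons p C ih =>
    obtain ⟨b, y⟩ := p
    cases b
    exacts [ih (.node (.refl y) h), ih (.node h (.refl y))]

def Step (t u : Term) : Prop := ∃ C r r', Contract r r' ∧ t = plug C r ∧ u = plug C r'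

theorem plug_append_singleton (C : List (Bool × Term)) (b : Bool) (y t : Term) :
    plug (C ++ [(b, y)]) t = bif b then node (plug C t) y else node y (plug C t) := by
  simp [plug]

theorem Step.par {t u : Term} (h : Step t u) : Par t u := by
  obtain ⟨C, r, r', hr, rfl, rfl⟩ := h
  exact hr.par.plug C

theorem Step.node_left {t u : Term} (h : Step t u) (y : Term) : Step (node t y) (node u y) := by
  obtain ⟨C, r, r', hr, rfl, rfl⟩ := h
  exact ⟨C ++ [(true, y)], r, r', hr, by simp [plug_append_singleton]⟩

theorem Step.node_right {t u : Term} (h : Step t u) (x : Term) : Step (node x t) (node x u) := by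
  obtain ⟨C, r, r', hr, rfl, rfl⟩ := h
  exact ⟨C ++ [(false, x)], r, r', hr, by simp [plug_append_singleton]⟩

theorem reflTransGen_step_of_par {t u : Term} (h : Par t u) : ReflTransGen Step t u := by
  have hnode {x x' y y' : Term} (hx : ReflTransGen Step x x') (hy : ReflTransGen Step y y') :
      ReflTransGen Step (node x y) (node x' y') :=
    (hx.lift (node · y) fun _ _ h => h.node_left y).trans
      (hy.lift (node x' ·) fun _ _ h => h.node_right x')
  induction h with
  | leaf => exact .refl
  | node _ _ ihx ihy => exact hnode ihx ihy
  | contract _ _ hc ihx ihy => exact (hnode ihx ihy).tail ⟨[], _, _, hc, rfl, rfl⟩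

theorem reflTransGen_par_iff_step {t u : Term} :
    ReflTransGen Par t u ↔ ReflTransGen Step t u :=
  ⟨fun h => h.lift' id fun _ _ => reflTransGen_step_of_par,
    ReflTransGen.mono (fun _ _ => Step.par) t u⟩

/-- Witnesses of the six kinds of `Contract`, in the order of its constructors. -/
abbrev Redex : Type :=
  (ℕ × ℕ × ℕ) ⊕ (ℕ × Term) ⊕ (ℕ × ℕ × Term) ⊕ (Term × Term) ⊕ (ℕ × Term × Term) ⊕
    (Term × Term × Term)

/-- The witness `(a, b, n)` of an application is valid if `φ_a(b)` converges within `n` steps. -/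
noncomputable def Redex.contraction : Redex → Option (Term × Term)
  | .inl (a, b, n) =>
    (evaln n (Denumerable.ofNat Code a) b).map fun c => (node (leaf a) (leaf b), leaf c)
  | .inr (.inl (a, y)) => some (node (leaf (ka a)) y, leaf a)
  | .inr (.inr (.inl (a, b, z))) =>
    some (node (leaf (sab a b)) z, node (node (leaf a) z) (node (leaf b) z))
  | .inr (.inr (.inr (.inl (x, y)))) => some (node (node (leaf k) x) y, x)
  | .inr (.inr (.inr (.inr (.inl (a, y, z))))) =>
    some (node (node (leaf (sa a)) y) z, node (node (leaf a) z) (node y z))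
  | .inr (.inr (.inr (.inr (.inr (x, y, z))))) =>
    some (node (node (node (leaf s) x) y) z, node (node x z) (node y z))

theorem contract_iff_exists_contraction {r r' : Term} :
    Contract r r' ↔ ∃ ρ : Redex, ρ.contraction = some (r, r') := by
  constructor
  · intro h
    induction h with
    | @app a b c h =>
      obtain ⟨n, hn⟩ := evaln_complete.1 (Part.eq_some_iff.1 h)
      exact ⟨.inl (a, b, n), by simp [Redex.contraction, Option.mem_def.1 hn]⟩
    | @ka _ a y h => exact ⟨.inr (.inl (a, y)), by simp [Redex.contraction, h]⟩
    | @sab _ a b z h => exact ⟨.inr (.inr (.inl (a, b, z))), by simp [Redex.contraction, h]⟩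
    | k x y h => exact ⟨.inr (.inr (.inr (.inl (x, y)))), by simp [Redex.contraction, h]⟩
    | @sa _ a y z h =>
      exact ⟨.inr (.inr (.inr (.inr (.inl (a, y, z))))), by simp [Redex.contraction, h]⟩
    | s x y z h =>
      exact ⟨.inr (.inr (.inr (.inr (.inr (x, y, z))))), by simp [Redex.contraction, h]⟩
  · rintro ⟨⟨a, b, n⟩ | ⟨a, y⟩ | ⟨a, b, z⟩ | ⟨x, y⟩ | ⟨a, y, z⟩ | ⟨x, y, z⟩, h⟩ <;>
      simp only [Redex.contraction, Option.map_eq_some_iff, Option.some.injEq, Prod.mk.injEq]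
        at h
    · obtain ⟨c, hc, rfl, rfl⟩ := h
      exact .app (Part.eq_some_iff.2 (evaln_sound hc))
    all_goals obtain ⟨rfl, rfl⟩ := h; constructor; rfl

noncomputable def contractIn (w : List (Bool × Term) × Redex) (t : Term) : Option Term :=
  w.2.contraction.bind fun p => if t = plug w.1 p.1 then some (plug w.1 p.2) else none

theorem step_iff_exists_contractIn {t u : Term} : Step t u ↔ ∃ w, contractIn w t = some u := by
  simp only [Step, contractIn, contract_iff_exists_contraction, Option.bind_eq_some_iff,
    Option.ite_none_right_eq_some, Option.some.injEq, Prod.exists]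
  constructor
  · rintro ⟨C, r, r', ⟨ρ, hρ⟩, rfl, rfl⟩
    exact ⟨C, ρ, r, r', hρ, rfl, rfl⟩
  · rintro ⟨C, ρ, r, r', hρ, rfl, rfl⟩
    exact ⟨C, r, r', ⟨ρ, hρ⟩, rfl, rfl⟩

noncomputable def reduceAlong (L : List (List (Bool × Term) × Redex)) (t : Term) : Option Term :=
  L.foldl (fun o w => o.bind (contractIn w)) (some t)

theorem reflTransGen_par_iff_exists_reduceAlong {t u : Term} :
    ReflTransGen Par t u ↔ ∃ L, reduceAlong L t = some u :=
  reflTransGen_par_iff_step.trans <| reflTransGen_iff_exists_foldl contractIn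
    (fun _ _ => step_iff_exists_contractIn) t u

section
open Primrec

theorem primrec_contraction : Primrec Redex.contraction := by
  have hleaf := primrec_leaf
  have hnode := primrec₂_node
  have hidx (i : ℕ) : Primrec (index i) := primrec₂_index.comp (const i) .id
  have happ : Primrec fun p : ℕ × ℕ × ℕ =>
      (evaln p.2.2 (Denumerable.ofNat Code p.1) p.2.1).map
        fun c => (node (leaf p.1) (leaf p.2.1), leaf c) :=
    option_map (primrec_evaln.comp (((snd.comp snd).pair ((Primrec.ofNat Code).comp fst)).pair
      (fst.comp snd))) (pair (hnode.comp (hleaf.comp (fst.comp fst))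
        (hleaf.comp (fst.comp (snd.comp fst)))) (hleaf.comp snd)).to₂
  have hka : Primrec fun p : ℕ × Term => some (node (leaf (ka p.1)) p.2, leaf p.1) :=
    option_some.comp (pair (hnode.comp (hleaf.comp ((hidx 0).comp fst)) snd) (hleaf.comp fst))
  have hsab : Primrec fun p : ℕ × ℕ × Term =>
      some (node (leaf (sab p.1 p.2.1)) p.2.2,
        node (node (leaf p.1) p.2.2) (node (leaf p.2.1) p.2.2)) :=
    option_some.comp (pair (hnode.comp (hleaf.comp ((hidx 1).comp
      (Primrec₂.natPair.comp fst (fst.comp snd)))) (snd.comp snd))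
      (hnode.comp (hnode.comp (hleaf.comp fst) (snd.comp snd))
        (hnode.comp (hleaf.comp (fst.comp snd)) (snd.comp snd))))
  have hk : Primrec fun p : Term × Term => some (node (node (leaf k) p.1) p.2, p.1) :=
    option_some.comp (pair (hnode.comp (hnode.comp (const _) fst) snd) fst)
  have hsa : Primrec fun p : ℕ × Term × Term =>
      some (node (node (leaf (sa p.1)) p.2.1) p.2.2,
        node (node (leaf p.1) p.2.2) (node p.2.1 p.2.2)) :=
    option_some.comp (pair (hnode.comp (hnode.comp (hleaf.comp ((hidx 2).comp fst))
      (fst.comp snd)) (snd.comp snd)) (hnode.comp (hnode.comp (hleaf.comp fst) (snd.comp snd))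
        (hnode.comp (fst.comp snd) (snd.comp snd))))
  have hs : Primrec fun p : Term × Term × Term =>
      some (node (node (node (leaf s) p.1) p.2.1) p.2.2,
        node (node p.1 p.2.2) (node p.2.1 p.2.2)) :=
    option_some.comp (pair (hnode.comp (hnode.comp (hnode.comp (const _) fst) (fst.comp snd))
      (snd.comp snd)) (hnode.comp (hnode.comp fst (snd.comp snd))
        (hnode.comp (fst.comp snd) (snd.comp snd))))
  exact (happ.sumElim <| hka.sumElim <| hsab.sumElim <| hk.sumElim <| hsa.sumElim hs).of_eq
    fun ρ => by rcases ρ with _ | _ | _ | _ | _ | _ <;> rfl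

theorem primrec₂_plug : Primrec₂ plug :=
  list_foldl fst snd <| (cond (fst.comp (snd.comp snd))
    (primrec₂_node.comp (fst.comp snd) (snd.comp (snd.comp snd)))
    (primrec₂_node.comp (snd.comp (snd.comp snd)) (fst.comp snd))).to₂

theorem primrec₂_contractIn : Primrec₂ contractIn :=
  option_bind (primrec_contraction.comp (snd.comp fst)) <| (Primrec.ite
    (Primrec.eq.comp (snd.comp fst) (primrec₂_plug.comp (fst.comp (fst.comp fst)) (fst.comp snd)))
    (option_some.comp (primrec₂_plug.comp (fst.comp (fst.comp fst)) (snd.comp snd)))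
    (const none)).to₂

theorem primrec₂_reduceAlong : Primrec₂ reduceAlong :=
  list_foldl fst (option_some.comp snd) <|
    (option_bind (fst.comp snd) (primrec₂_contractIn.comp (snd.comp (snd.comp fst)) snd).to₂).to₂

theorem rePred_conv {α : Type*} [Primcodable α] {f g : α → Term} (hf : Primrec f)
    (hg : Primrec g) : REPred fun a => Conv (f a) (g a) := by
  refine (REPred.exists (β := List _ × List _ × Term)
    (p := fun a q => reduceAlong q.1 (f a) = some q.2.2 ∧ reduceAlong q.2.1 (g a) = some q.2.2)
    ?_).of_eq fun a => ?_
  · exact (Primrec.eq.comp (primrec₂_reduceAlong.comp (fst.comp snd) (hf.comp fst))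
      (option_some.comp (snd.comp (snd.comp snd)))).and
      (Primrec.eq.comp (primrec₂_reduceAlong.comp (fst.comp (snd.comp snd)) (hg.comp fst))
        (option_some.comp (snd.comp (snd.comp snd))))
  · simp only [Conv, Join, reflTransGen_par_iff_exists_reduceAlong, Prod.exists]
    constructor
    · rintro ⟨L₁, L₂, w, h₁, h₂⟩; exact ⟨w, ⟨L₁, h₁⟩, ⟨L₂, h₂⟩⟩
    · rintro ⟨w, ⟨L₁, h₁⟩, ⟨L₂, h₂⟩⟩; exact ⟨L₁, L₂, w, h₁, h₂⟩

end

end K1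

open K1 Term

/-- There is a strong completion of `K₁` computable in the halting problem
`H = {e | φ_e(e)↓}`: an `H`-computable presentation `(ψ, E)` of a total
combinatory algebra together with a strong embedding of `K₁` into it. -/
theorem strong_completion_in_halting_problem :
    ∃ (ψ : ℕ → ℕ → ℕ) (E : ℕ → ℕ → Prop) (f : ℕ → ℕ),
      YPresentation {e : ℕ | (phi e e).Dom} ψ E ∧ StrongEmb ψ E f := by
  have hcomb (a b c : ℕ) : Conv (node (node (leaf k) (ofNat a)) (ofNat b)) (ofNat a) ∧
      Conv (node (node (node (leaf s) (ofNat a)) (ofNat b)) (ofNat c))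
        (node (node (ofNat a) (ofNat c)) (node (ofNat b) (ofNat c))) :=
    ⟨(Contract.k _ _ rfl).conv, (Contract.s _ _ _ rfl).conv⟩
  refine ⟨fun m n => toNat (node (ofNat m) (ofNat n)), fun m n => Conv (ofNat m) (ofNat n),
    fun n => toNat (leaf n), ⟨?_, conv_equivalence.comap ofNat, ?_, ?_, ?_⟩, k, s,
    k1Combinators, ⟨?_, ?_⟩, ?_⟩
  · exact .of_partrec <| Partrec.nat_iff.1 <| Computable.partrec <| Primrec.to_comp <|
      primrec_toNat.comp <| primrec₂_node.comp (primrec_ofNat.comp (Primrec.fst.comp .unpair))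
        (primrec_ofNat.comp (Primrec.snd.comp .unpair))
  · exact (rePred_conv (primrec_ofNat.comp (Primrec.fst.comp .unpair))
      (primrec_ofNat.comp (Primrec.snd.comp .unpair))).oracleRecursiveIn_chi_haltingSet
  · intro n n' m m' hn hm
    simpa [ofNat_toNat] using hn.node hm
  · exact ⟨toNat (leaf k), toNat (leaf s), by simpa [ofNat_toNat] using hcomb⟩
  · intro n m h
    simp only [ofNat_toNat] at h
    exact h.eq_of_leaf
  · intro a b c h
    simpa [ofNat_toNat] using (Contract.app h).conv
  · simpa [ofNat_toNat] using hcomb
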